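/- arXiv:2302.03656 — 3 statements merged into one kernel-verified Lean document; each statement's English description precedes it below -/
import Mathlib

section
/- As p_s → ∞, the maximum sensing rate R_s(p_s) = max over S with tr(SS^H) ≤ L p_s of (M/L) log₂ det(I + σ⁻² S^H R S) satisfies R_s(p_s) − (NM/L)(log₂ p_s − (1/N)·Σ_{n=1}^N log₂(N σ²/(L λ_n))) → 0, i.e., the high-SNR slope is NM/L and the high-SNR power offset is (1/N)Σ_n log₂(N σ²/(L λ_n)). -/
open Matrix Finset Filter
open scoped ComplexOrder

/-!
Write `g n = λ n / σ²`. Sylvester's identity `det (1 + A B) = det (1 + B A)` turns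
`det (I + σ⁻² Sᴴ R S)` into `(∏ g n) · det (diag (1 / g) + (U S) (U S)ᴴ)`. The second matrix is
positive definite with trace `∑ 1 / g n + tr (S Sᴴ)`, so AM-GM on its eigenvalues bounds the
determinant by `((L p_s + ∑ 1 / g n) / N) ^ N`. Equality holds for `S = Uᴴ diag (√s) [I 0]` with the
water-filling powers `s n = (L p_s + ∑ 1 / g) / N - 1 / g n`, which are nonnegative once `p_s` is
large. The maximal rate is then an explicit logarithm, and it differs from the high-SNR line by
`(N M / L) log₂ (1 + ∑ (1 / g n) / (L p_s)) → 0`.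
-/

theorem Real.prod_le_sum_div_card_pow {ι : Type*} [Fintype ι] [Nonempty ι] {z : ι → ℝ}
    (hz : ∀ i, 0 ≤ z i) : ∏ i, z i ≤ ((∑ i, z i) / Fintype.card ι) ^ Fintype.card ι := by
  have hgm := Real.geom_mean_le_arith_mean univ (fun _ => 1) z (fun _ _ => zero_le_one)
    (by simp [Fintype.card_pos]) (fun i _ => hz i)
  simp only [Real.rpow_one, sum_const, card_univ, nsmul_eq_mul, mul_one, one_mul] at hgm
  have hprod : 0 ≤ ∏ i, z i := prod_nonneg fun i _ => hz i
  calc ∏ i, z i = ((∏ i, z i) ^ ((Fintype.card ι : ℝ))⁻¹) ^ Fintype.card ι :=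
        (Real.rpow_inv_natCast_pow hprod Fintype.card_ne_zero).symm
    _ ≤ _ := by gcongr

theorem Matrix.PosSemidef.re_det_le_re_trace_div_card_pow {n 𝕜 : Type*} [Fintype n]
    [DecidableEq n] [Nonempty n] [RCLike 𝕜] {A : Matrix n n 𝕜} (hA : A.PosSemidef) :
    RCLike.re A.det ≤ (RCLike.re A.trace / Fintype.card n) ^ Fintype.card n := by
  rw [hA.isHermitian.det_eq_prod_eigenvalues, hA.isHermitian.trace_eq_sum_eigenvalues,
    ← RCLike.ofReal_prod, ← RCLike.ofReal_sum, RCLike.ofReal_re, RCLike.ofReal_re]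
  exact Real.prod_le_sum_div_card_pow hA.eigenvalues_nonneg

theorem Matrix.det_one_add_mul_diagonal_mul {n m K : Type*} [Fintype n] [DecidableEq n]
    [Fintype m] [DecidableEq m] [Field K] (B : Matrix m n K) {w : n → K} (hw : ∀ i, w i ≠ 0)
    (A : Matrix n m K) :
    det (1 + B * diagonal w * A) = (∏ i, w i) * det (diagonal w⁻¹ + A * B) := by
  have hfactor : diagonal w * (diagonal w⁻¹ + A * B) = 1 + diagonal w * A * B := by
    rw [Matrix.mul_add, diagonal_mul_diagonal, Matrix.mul_assoc]
    congr
    ext i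
    simp [hw]
  rw [Matrix.mul_assoc B, det_one_add_mul_comm, ← det_diagonal, ← det_mul, hfactor]

theorem Matrix.PosDef.diagonal_add_mul_conjTranspose {n m 𝕜 : Type*} [Fintype n] [DecidableEq n]
    [Fintype m] [RCLike 𝕜] {d : n → ℝ} (hd : ∀ i, 0 < d i) (A : Matrix n m 𝕜) :
    (diagonal (fun i => (d i : 𝕜)) + A * Aᴴ).PosDef :=
  (posDef_diagonal_iff.mpr fun i => RCLike.ofReal_pos.mpr (hd i)).add_posSemidef
    (posSemidef_self_mul_conjTranspose A)

theorem Matrix.exists_mul_conjTranspose_eq_diagonal {n m 𝕜 : Type*} [Fintype n] [DecidableEq n]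
    [Fintype m] [DecidableEq m] [RCLike 𝕜] (e : n ↪ m) {s : n → ℝ} (hs : ∀ i, 0 ≤ s i) :
    ∃ E : Matrix n m 𝕜, E * Eᴴ = diagonal (fun i => (s i : 𝕜)) := by
  refine ⟨diagonal (fun i => (√(s i) : 𝕜)) * (1 : Matrix m m 𝕜).submatrix e id, ?_⟩
  have hsel : (1 : Matrix m m 𝕜).submatrix e id * ((1 : Matrix m m 𝕜).submatrix e id)ᴴ = 1 := by
    rw [conjTranspose_submatrix, conjTranspose_one, ← submatrix_mul _ _ _ _ _ Function.bijective_id,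
      Matrix.mul_one, submatrix_one_embedding]
  rw [conjTranspose_mul, Matrix.mul_assoc, ← Matrix.mul_assoc _ _ (diagonal _)ᴴ, hsel,
    Matrix.one_mul, diagonal_conjTranspose, diagonal_mul_diagonal]
  congr 1
  ext i
  simp [← RCLike.ofReal_mul, Real.mul_self_sqrt (hs i)]

section Waterfilling

variable {n m : Type*} [Fintype n] [DecidableEq n] [Fintype m]
  {U R : Matrix n n ℂ} {g : n → ℝ}

theorem det_one_add_conjTranspose_mul_mul_eq [DecidableEq m]
    (hRU : R = Uᴴ * diagonal (fun i => (g i : ℂ)) * U) (hg : ∀ i, 0 < g i)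
    (S : Matrix n m ℂ) :
    det (1 + Sᴴ * R * S) =
      ((∏ i, g i : ℝ) : ℂ) *
        det (diagonal (fun i => (((g i)⁻¹ : ℝ) : ℂ)) + (U * S) * (U * S)ᴴ) := by
  have hw : ∀ i, (g i : ℂ) ≠ 0 := fun i => Complex.ofReal_ne_zero.mpr (hg i).ne'
  have hconj : Sᴴ * R * S = (U * S)ᴴ * diagonal (fun i => (g i : ℂ)) * (U * S) := by
    simp only [hRU, conjTranspose_mul, Matrix.mul_assoc]
  rw [hconj, det_one_add_mul_diagonal_mul _ hw, Complex.ofReal_prod]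
  simp [Pi.inv_def]

theorem trace_mul_mul_conjTranspose_of_isometry (hU : Uᴴ * U = 1) (S : Matrix n m ℂ) :
    ((U * S) * (U * S)ᴴ).trace = (S * Sᴴ).trace := by
  rw [trace_mul_comm, conjTranspose_mul, Matrix.mul_assoc, ← Matrix.mul_assoc Uᴴ, hU,
    Matrix.one_mul, trace_mul_comm]

theorem re_trace_diagonal_add_mul_conjTranspose (hU : Uᴴ * U = 1) (S : Matrix n m ℂ) :
    (diagonal (fun i => (((g i)⁻¹ : ℝ) : ℂ)) + (U * S) * (U * S)ᴴ).trace.re =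
      ∑ i, (g i)⁻¹ + (S * Sᴴ).trace.re := by
  rw [trace_add, trace_mul_mul_conjTranspose_of_isometry hU, trace_diagonal, Complex.add_re,
    ← Complex.ofReal_sum, Complex.ofReal_re]

theorem re_det_one_add_conjTranspose_mul_mul_pos [DecidableEq m]
    (hRU : R = Uᴴ * diagonal (fun i => (g i : ℂ)) * U) (hg : ∀ i, 0 < g i)
    (S : Matrix n m ℂ) : 0 < (det (1 + Sᴴ * R * S)).re := by
  have hQ := PosDef.diagonal_add_mul_conjTranspose (fun i => inv_pos.mpr (hg i)) (U * S)
  rw [det_one_add_conjTranspose_mul_mul_eq hRU hg, Complex.re_ofReal_mul]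
  exact mul_pos (prod_pos fun i _ => hg i) (Complex.pos_iff.mp hQ.det_pos).1

theorem re_det_one_add_conjTranspose_mul_mul_le [DecidableEq m] [Nonempty n] (hU : Uᴴ * U = 1)
    (hRU : R = Uᴴ * diagonal (fun i => (g i : ℂ)) * U) (hg : ∀ i, 0 < g i)
    (S : Matrix n m ℂ) :
    (det (1 + Sᴴ * R * S)).re ≤
      (∏ i, g i) * (((S * Sᴴ).trace.re + ∑ i, (g i)⁻¹) / Fintype.card n) ^ Fintype.card n := by
  have hQ := PosDef.diagonal_add_mul_conjTranspose (fun i => inv_pos.mpr (hg i)) (U * S)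
  rw [det_one_add_conjTranspose_mul_mul_eq hRU hg, Complex.re_ofReal_mul, add_comm _ (∑ i, _),
    ← re_trace_diagonal_add_mul_conjTranspose hU]
  exact mul_le_mul_of_nonneg_left hQ.posSemidef.re_det_le_re_trace_div_card_pow
    (prod_nonneg fun i _ => (hg i).le)

theorem exists_re_trace_eq_and_re_det_eq [DecidableEq m] (e : n ↪ m) (hU : Uᴴ * U = 1)
    (hRU : R = Uᴴ * diagonal (fun i => (g i : ℂ)) * U) (hg : ∀ i, 0 < g i)
    {s : n → ℝ} (hs : ∀ i, 0 ≤ s i) :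
    ∃ S : Matrix n m ℂ, (S * Sᴴ).trace.re = ∑ i, s i ∧
      (det (1 + Sᴴ * R * S)).re = (∏ i, g i) * ∏ i, ((g i)⁻¹ + s i) := by
  obtain ⟨E, hE⟩ : ∃ E : Matrix n m ℂ, E * Eᴴ = diagonal (fun i => (s i : ℂ)) :=
    exists_mul_conjTranspose_eq_diagonal e hs
  have hU' : U * Uᴴ = 1 := mul_eq_one_comm.mp hU
  have hUE : U * (Uᴴ * E) = E := by rw [← Matrix.mul_assoc, hU', Matrix.one_mul]
  refine ⟨Uᴴ * E, ?_, ?_⟩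
  · rw [← trace_mul_mul_conjTranspose_of_isometry hU, hUE, hE, trace_diagonal]
    simp
  · rw [det_one_add_conjTranspose_mul_mul_eq hRU hg, hUE, hE, diagonal_add, det_diagonal,
      Complex.re_ofReal_mul]
    congr 1
    norm_cast

theorem isGreatest_re_det_one_add_conjTranspose_mul_mul [DecidableEq m] [Nonempty n]
    (e : n ↪ m) (hU : Uᴴ * U = 1)
    (hRU : R = Uᴴ * diagonal (fun i => (g i : ℂ)) * U) (hg : ∀ i, 0 < g i) {T : ℝ}
    (hactive : ∀ i, (g i)⁻¹ ≤ (T + ∑ j, (g j)⁻¹) / Fintype.card n) :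
    IsGreatest ((fun S : Matrix n m ℂ => (det (1 + Sᴴ * R * S)).re) '' {S | (S * Sᴴ).trace.re ≤ T})
      ((∏ i, g i) * ((T + ∑ j, (g j)⁻¹) / Fintype.card n) ^ Fintype.card n) := by
  have hN : (Fintype.card n : ℝ) ≠ 0 := Nat.cast_ne_zero.mpr Fintype.card_ne_zero
  constructor
  · obtain ⟨S, htr, hdet⟩ := exists_re_trace_eq_and_re_det_eq e hU hRU hg
      (fun i => sub_nonneg.mpr (hactive i))
    refine ⟨S, ?_, ?_⟩
    · rw [Set.mem_ofPred_eq, htr, sum_sub_distrib, sum_const, card_univ, nsmul_eq_mul,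
        mul_div_cancel₀ _ hN, add_sub_cancel_right]
    · simp only [hdet, add_sub_cancel, prod_const, card_univ]
  · rintro _ ⟨S, hS, rfl⟩
    refine (re_det_one_add_conjTranspose_mul_mul_le hU hRU hg S).trans ?_
    have htr : 0 ≤ (S * Sᴴ).trace.re :=
      (Complex.nonneg_iff.mp (posSemidef_self_mul_conjTranspose S).trace_nonneg).1
    have hc : 0 ≤ ∑ j, (g j)⁻¹ := sum_nonneg fun j _ => (inv_pos.mpr (hg j)).le
    gcongr
    · exact prod_nonneg fun i _ => (hg i).le
    · exact hS

theorem isGreatest_sensing_rate [DecidableEq m] [Nonempty n] (e : n ↪ m) (hU : Uᴴ * U = 1)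
    {lam : n → ℝ} (hlam : ∀ i, 0 < lam i) (hRU : R = Uᴴ * diagonal (fun i => (lam i : ℂ)) * U)
    {σ2 : ℝ} (hσ2 : 0 < σ2) {a : ℝ} (ha : 0 ≤ a) {T : ℝ}
    (hactive : ∀ i, σ2 / lam i ≤ (T + ∑ j, σ2 / lam j) / Fintype.card n) :
    IsGreatest {y : ℝ | ∃ S : Matrix n m ℂ, (S * Sᴴ).trace.re ≤ T ∧
        y = a * Real.logb 2 (det (1 + (σ2 : ℂ)⁻¹ • (Sᴴ * R * S))).re}
      (a * Real.logb 2 ((∏ i, lam i / σ2) *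
        ((T + ∑ j, σ2 / lam j) / Fintype.card n) ^ Fintype.card n)) := by
  have hg : ∀ i, 0 < lam i / σ2 := fun i => div_pos (hlam i) hσ2
  have hRg : (σ2 : ℂ)⁻¹ • R = Uᴴ * diagonal (fun i => ((lam i / σ2 : ℝ) : ℂ)) * U := by
    rw [hRU, ← Matrix.smul_mul, ← Matrix.mul_smul, ← diagonal_smul]
    congr 3
    funext i
    simp [div_eq_inv_mul]
  simp_rw [← inv_div _ σ2] at hactive ⊢
  have hdet := isGreatest_re_det_one_add_conjTranspose_mul_mul e hU hRg hg hactive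
  have hpos : (fun S : Matrix n m ℂ => (det (1 + Sᴴ * ((σ2 : ℂ)⁻¹ • R) * S)).re) ''
      {S | (S * Sᴴ).trace.re ≤ T} ⊆ Set.Ioi 0 := by
    rintro _ ⟨S, -, rfl⟩
    exact re_det_one_add_conjTranspose_mul_mul_pos hRg hg S
  have hmono : MonotoneOn (fun y => a * Real.logb 2 y) (Set.Ioi 0) :=
    fun x hx y _ hxy => mul_le_mul_of_nonneg_left (Real.logb_le_logb_of_le one_lt_two hx hxy) ha
  have h := (hmono.mono hpos).map_isGreatest hdet
  simp_rw [Set.image_image, Matrix.mul_smul, Matrix.smul_mul] at h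
  simpa only [Set.image, Set.mem_ofPred_eq, eq_comm] using h

end Waterfilling

theorem logb_prod_mul_pow_sub_offset {ι : Type*} [Fintype ι] [Nonempty ι] {lam : ι → ℝ}
    (hlam : ∀ i, 0 < lam i) {σ2 K x c : ℝ} (hσ2 : 0 < σ2) (hK : 0 < K) (hx : 0 < x)
    (hc : 0 ≤ c) :
    Real.logb 2 ((∏ i, lam i / σ2) * ((K * x + c) / Fintype.card ι) ^ Fintype.card ι) -
        Fintype.card ι * (Real.logb 2 x -
          (1 / Fintype.card ι) * ∑ i, Real.logb 2 (Fintype.card ι * σ2 / (K * lam i))) =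
      Fintype.card ι * Real.logb 2 (1 + c / (K * x)) := by
  have hN : (0 : ℝ) < Fintype.card ι := Nat.cast_pos.mpr Fintype.card_pos
  have hKx : 0 < K * x := mul_pos hK hx
  have hratio : 1 + c / (K * x) = (K * x + c) / (K * x) := by field_simp
  have hgain : ∑ i, Real.logb 2 (lam i / σ2) = ∑ i, Real.logb 2 (lam i) -
      Fintype.card ι * Real.logb 2 σ2 := by
    simp_rw [Real.logb_div (hlam _).ne' hσ2.ne', sum_sub_distrib, sum_const, card_univ,
      nsmul_eq_mul]
  have hsum : ∑ i, Real.logb 2 (Fintype.card ι * σ2 / (K * lam i)) =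
      Fintype.card ι * (Real.logb 2 (Fintype.card ι) + Real.logb 2 σ2 - Real.logb 2 K) -
        ∑ i, Real.logb 2 (lam i) := by
    simp_rw [Real.logb_div (mul_pos hN hσ2).ne' (mul_pos hK (hlam _)).ne',
      Real.logb_mul hN.ne' hσ2.ne', Real.logb_mul hK.ne' (hlam _).ne', sum_sub_distrib,
      sum_add_distrib, sum_const, card_univ, nsmul_eq_mul]
    ring
  rw [Real.logb_mul (prod_pos fun i _ => div_pos (hlam i) hσ2).ne' (by positivity),
    Real.logb_pow, Real.logb_prod _ _ fun i _ => (div_pos (hlam i) hσ2).ne', hgain,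
    Real.logb_div (by positivity) hN.ne', hsum, hratio, Real.logb_div (by positivity) hKx.ne',
    Real.logb_mul hK.ne' hx.ne']
  field_simp
  ring

theorem tendsto_logb_one_add_div_mul_atTop (b c : ℝ) {K : ℝ} (hK : 0 < K) :
    Tendsto (fun x : ℝ => Real.logb b (1 + c / (K * x))) atTop (nhds 0) := by
  have hone : Tendsto (fun x : ℝ => 1 + c / (K * x)) atTop (nhds 1) := by
    simpa using tendsto_const_nhds.add
      (tendsto_const_nhds.div_atTop (tendsto_id.const_mul_atTop hK))
  rw [← Real.logb_one (b := b)]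
  exact (Real.continuousAt_logb one_ne_zero).tendsto.comp hone

theorem max_sensing_rate_high_SNR_general (N L M : ℕ) (hN : 0 < N) (hL : N ≤ L)
    (R : Matrix (Fin N) (Fin N) ℂ)
    (U : Matrix (Fin N) (Fin N) ℂ) (hU : Uᴴ * U = 1)
    (lam : Fin N → ℝ) (hlam : ∀ n, 0 < lam n)
    (hRU : R = Uᴴ * Matrix.diagonal (fun n => (lam n : ℂ)) * U)
    (σ2 : ℝ) (hσ2 : 0 < σ2) :
    Tendsto (fun ps : ℝ =>
      sSup {y : ℝ | ∃ S : Matrix (Fin N) (Fin L) ℂ,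
          (Matrix.trace (S * Sᴴ)).re ≤ L * ps ∧
          y = (M : ℝ) / L * Real.logb 2 (Matrix.det (1 + (σ2 : ℂ)⁻¹ • (Sᴴ * R * S))).re} -
        ((N : ℝ) * M / L) *
          (Real.logb 2 ps - (1 / N) * ∑ n, Real.logb 2 (N * σ2 / (L * lam n))))
      atTop (nhds 0) := by
  have : Nonempty (Fin N) := Fin.pos_iff_nonempty.mp hN
  have hLpos : (0 : ℝ) < L := Nat.cast_pos.mpr (hN.trans_le hL)
  set c := ∑ n, σ2 / lam n
  have hc : 0 ≤ c := sum_nonneg fun n _ => (div_pos hσ2 (hlam n)).le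
  have hlevel : Tendsto (fun ps : ℝ => (L * ps + c) / N) atTop atTop :=
    ((tendsto_id.const_mul_atTop hLpos).atTop_add tendsto_const_nhds).atTop_div_const
      (Nat.cast_pos.mpr hN)
  have hlim := (tendsto_logb_one_add_div_mul_atTop 2 c hLpos).const_mul ((N : ℝ) * M / L)
  rw [mul_zero] at hlim
  refine hlim.congr' ?_
  filter_upwards [eventually_gt_atTop 0,
    eventually_all.2 fun n => hlevel.eventually_ge_atTop (σ2 / lam n)] with ps hps hactive
  have hrate := isGreatest_sensing_rate (Fin.castLEEmb hL) hU hlam hRU hσ2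
    (a := M / L) (by positivity) (T := L * ps) (by simpa using hactive)
  have hoffset := logb_prod_mul_pow_sub_offset hlam hσ2 hLpos hps hc
  simp only [Fintype.card_fin] at hrate hoffset
  rw [hrate.csSup_eq]
  linear_combination (-(M : ℝ) / L) * hoffset

/-- High-SNR behaviour of the maximum sensing rate: as `p_s → ∞`,
`R_s(p_s) - (NM/L)(log₂ p_s - (1/N) ∑ₙ log₂(N σ² /(L λₙ))) → 0`;
the high-SNR slope is `NM/L` and the power offset is `(1/N) ∑ₙ log₂(N σ²/(L λₙ))`. -/
theorem max_sensing_rate_high_SNR (N L M : ℕ) (hN : 0 < N) (hL : N ≤ L) (hM : N ≤ M)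
    (R : Matrix (Fin N) (Fin N) ℂ) (hR : R.PosDef)
    (U : Matrix (Fin N) (Fin N) ℂ) (hU : Uᴴ * U = 1)
    (lam : Fin N → ℝ) (hlam : ∀ n, 0 < lam n)
    (hRU : R = Uᴴ * Matrix.diagonal (fun n => (lam n : ℂ)) * U)
    (σ2 : ℝ) (hσ2 : 0 < σ2) :
    Tendsto (fun ps : ℝ =>
      sSup {y : ℝ | ∃ S : Matrix (Fin N) (Fin L) ℂ,
          (Matrix.trace (S * Sᴴ)).re ≤ L * ps ∧
          y = (M : ℝ) / L * Real.logb 2 (Matrix.det (1 + (σ2 : ℂ)⁻¹ • (Sᴴ * R * S))).re} -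
        ((N : ℝ) * M / L) *
          (Real.logb 2 ps - (1 / N) * ∑ n, Real.logb 2 (N * σ2 / (L * lam n))))
      atTop (nhds 0) :=
  max_sensing_rate_high_SNR_general N L M hN hL R U hU lam hlam hRU σ2 hσ2
end

section
/- In FDSAC with bandwidth fraction α ∈ [0,1] for communication, the high-SNR slope of the ergodic communication rate α·E[log₂ det(I + (p_c/α) H H^H)] is αK, and the high-SNR slope of the maximized sensing rate (M(1−α)/L)·max_{tr(SS^H)≤Lp_s} log₂ det(I + S^H R S/(1−α)) is (1−α)NM/L; hence for α ∈ (0,1) both slopes are strictly smaller than the ISAC slopes K and NM/L. -/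
/-!
Both rates are of the form `log₂ det (1 + c X)` with `X` positive semidefinite of size `d`, i.e.
`∑ᵢ log₂ (1 + c λᵢ)`. When every `λᵢ > 0`, `c ^ d det X ≤ det (1 + c X) ≤ c ^ d det (1 + X)` for
`c ≥ 1`, so the rate is `d log₂ c + O(1)` and its high-SNR slope is `d`.

For communication `d = K`: Sylvester's identity trades `H Hᴴ` for the full-rank `Hᴴ H`, and the two
bounds survive taking expectations. For sensing `d = N`: a waveform with `S Sᴴ = p I` meets the
budget and attains `det (1 + p R / (1 - α))`, while for any admissible `S`, writing `R = Wᴴ W`,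
`det (1 + Sᴴ R S / (1 - α))` is the `N × N` determinant of `1 + (W S) (W S)ᴴ / (1 - α)`, whose
eigenvalues are at most `tr R · L p / (1 - α)`. The prefactors `α` and `M (1 - α) / L` then give
the FDSAC slopes.
-/

open Matrix Finset MeasureTheory Filter
open scoped ComplexOrder ProbabilityTheory

theorem tendsto_div_of_sub_mul_mem_Icc {α : Type*} {l : Filter α} {f g : α → ℝ} {a c₁ c₂ : ℝ}
    (hg : Tendsto g l atTop) (h : ∀ᶠ x in l, f x - a * g x ∈ Set.Icc c₁ c₂) :
    Tendsto (fun x => f x / g x) l (nhds a) := by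
  have hlim : ∀ c : ℝ, Tendsto (fun x => a + c / g x) l (nhds a) := fun c => by
    simpa using tendsto_const_nhds.add (tendsto_const_nhds.div_atTop hg)
  refine tendsto_of_tendsto_of_tendsto_of_le_of_le' (hlim c₁) (hlim c₂) ?_ ?_ <;>
    filter_upwards [h, hg.eventually_gt_atTop 0] with x ⟨hx₁, hx₂⟩ hgx
  · rw [le_div_iff₀ hgx, add_mul, div_mul_cancel₀ _ hgx.ne']
    linarith
  · rw [div_le_iff₀ hgx, add_mul, div_mul_cancel₀ _ hgx.ne']
    linarith

theorem MeasureTheory.integral_const_add {Ω : Type*} [MeasurableSpace Ω] {μ : Measure Ω}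
    [IsProbabilityMeasure μ] {f : Ω → ℝ} (hf : Integrable f μ) (a : ℝ) :
    ∫ ω, (a + f ω) ∂μ = a + ∫ ω, f ω ∂μ := by
  rw [integral_add (integrable_const a) hf, integral_const, probReal_univ, one_smul]

namespace Matrix

theorem mulVec_injective_of_rank_eq_card {m n K : Type*} [Fintype n] [Field K] {A : Matrix m n K}
    (hA : A.rank = Fintype.card n) : Function.Injective A.mulVec := by
  have h := A.mulVecLin.finrank_range_add_finrank_ker
  rw [← Matrix.rank, hA, Module.finrank_fintype_fun_eq_card] at h
  have hker : Module.finrank K (LinearMap.ker A.mulVecLin) = 0 := by omega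
  exact LinearMap.ker_eq_bot.mp (Submodule.finrank_eq_zero.mp hker)

theorem exists_mul_conjTranspose_eq_smul_one {n l 𝕜 : Type*} [Fintype l] [DecidableEq n]
    [DecidableEq l] [RCLike 𝕜] (e : n ↪ l) {P : ℝ} (hP : 0 ≤ P) :
    ∃ S : Matrix n l 𝕜, S * Sᴴ = (P : 𝕜) • 1 := by
  refine ⟨(Real.sqrt P : 𝕜) • (1 : Matrix l l 𝕜).submatrix e id, ?_⟩
  rw [conjTranspose_smul, conjTranspose_submatrix, conjTranspose_one, Matrix.smul_mul,
    Matrix.mul_smul, smul_smul, ← submatrix_mul _ _ _ _ _ Function.bijective_id, Matrix.one_mul,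
    submatrix_one_embedding, RCLike.star_def, RCLike.conj_ofReal, ← RCLike.ofReal_mul,
    Real.mul_self_sqrt hP]

variable {l m n : Type*} [Fintype l] [Fintype m] [Fintype n]

theorem det_one_add_smul_mul_comm {α : Type*} [CommRing α] [DecidableEq m] [DecidableEq n]
    (c : α) (A : Matrix m n α) (B : Matrix n m α) :
    det (1 + c • (A * B)) = det (1 + c • (B * A)) := by
  rw [← Matrix.mul_smul, ← Matrix.smul_mul, det_one_add_mul_comm]

section Frobenius

attribute [local instance] frobeniusNormedAddCommGroup

theorem re_trace_mul_conjTranspose (A : Matrix m n ℂ) : (trace (A * Aᴴ)).re = ‖A‖ ^ 2 := by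
  rw [frobenius_norm_def, ← Real.sqrt_eq_rpow, Real.sq_sqrt (by positivity)]
  simp only [trace, diag, mul_apply, conjTranspose_apply, Complex.re_sum, Complex.star_def,
    Complex.mul_conj']
  norm_cast

theorem re_trace_mul_mul_conjTranspose_le (A : Matrix m n ℂ) (B : Matrix n l ℂ) :
    (trace (A * B * (A * B)ᴴ)).re ≤ (trace (A * Aᴴ)).re * (trace (B * Bᴴ)).re := by
  simp only [re_trace_mul_conjTranspose, ← mul_pow]
  gcongr
  exact frobenius_norm_mul A B

end Frobenius

theorem PosSemidef.re_trace_nonneg {B : Matrix n n ℂ} (hB : B.PosSemidef) : 0 ≤ (trace B).re :=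
  (RCLike.nonneg_iff.mp hB.trace_nonneg).1

variable [DecidableEq n]

theorem IsHermitian.det_one_add_smul {𝕜 : Type*} [RCLike 𝕜] {B : Matrix n n 𝕜}
    (hB : B.IsHermitian) (c : ℝ) :
    det (1 + (c : 𝕜) • B) = ∏ i, ((1 + c * hB.eigenvalues i : ℝ) : 𝕜) := by
  have hcfc : 1 + (c : 𝕜) • B = cfc (fun x : ℝ => 1 + c * x) B := by
    rw [cfc_add .., cfc_const_one .., cfc_const_mul .., cfc_id' ..]
    rw [← RCLike.real_smul_eq_coe_smul]
  rw [hcfc, hB.cfc_eq]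
  simp [IsHermitian.cfc, -Unitary.conjStarAlgAut_apply]

theorem IsHermitian.re_det_one_add_smul {B : Matrix n n ℂ} (hB : B.IsHermitian) (c : ℝ) :
    (det (1 + (c : ℂ) • B)).re = ∏ i, (1 + c * hB.eigenvalues i) := by
  have h := congrArg Complex.re (hB.det_one_add_smul c)
  rw [← RCLike.ofReal_prod] at h
  exact h.trans (Complex.ofReal_re _)

theorem IsHermitian.re_det {B : Matrix n n ℂ} (hB : B.IsHermitian) :
    (det B).re = ∏ i, hB.eigenvalues i := by
  rw [hB.det_eq_prod_eigenvalues, ← RCLike.ofReal_prod]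
  exact Complex.ofReal_re _

namespace PosSemidef

variable {B : Matrix n n ℂ} {c : ℝ}

theorem eigenvalues_le_re_trace (hB : B.PosSemidef) (i : n) :
    hB.isHermitian.eigenvalues i ≤ (trace B).re := by
  rw [hB.isHermitian.trace_eq_sum_eigenvalues, ← RCLike.ofReal_sum]
  change _ ≤ Complex.re (Complex.ofReal _)
  rw [Complex.ofReal_re]
  exact single_le_sum (fun j _ => hB.eigenvalues_nonneg j) (mem_univ i)

theorem one_add_mul_eigenvalues_pos (hB : B.PosSemidef) (hc : 0 ≤ c) (i : n) :
    0 < 1 + c * hB.isHermitian.eigenvalues i := by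
  have := mul_nonneg hc (hB.eigenvalues_nonneg i)
  linarith

theorem re_det_one_add_smul_pos (hB : B.PosSemidef) (hc : 0 ≤ c) :
    0 < (det (1 + (c : ℂ) • B)).re := by
  rw [hB.isHermitian.re_det_one_add_smul]
  exact prod_pos fun i _ => hB.one_add_mul_eigenvalues_pos hc i

theorem re_det_one_add_pos (hB : B.PosSemidef) : 0 < (det (1 + B)).re := by
  simpa using hB.re_det_one_add_smul_pos zero_le_one

theorem pow_mul_re_det_le_re_det_one_add_smul (hB : B.PosSemidef) (hc : 0 ≤ c) :
    c ^ Fintype.card n * (det B).re ≤ (det (1 + (c : ℂ) • B)).re := by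
  rw [hB.isHermitian.re_det_one_add_smul, hB.isHermitian.re_det, ← card_univ, ← prod_const,
    ← prod_mul_distrib]
  exact prod_le_prod (fun i _ => mul_nonneg hc (hB.eigenvalues_nonneg i))
    fun i _ => le_add_of_nonneg_left zero_le_one

theorem re_det_one_add_smul_le_pow_mul (hB : B.PosSemidef) (hc : 1 ≤ c) :
    (det (1 + (c : ℂ) • B)).re ≤ c ^ Fintype.card n * (det (1 + B)).re := by
  have h₁ := hB.isHermitian.re_det_one_add_smul 1
  rw [Complex.ofReal_one, one_smul] at h₁
  rw [hB.isHermitian.re_det_one_add_smul, h₁, ← card_univ, ← prod_const, ← prod_mul_distrib]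
  refine prod_le_prod (fun i _ => (hB.one_add_mul_eigenvalues_pos (by linarith) i).le)
    fun i _ => ?_
  nlinarith [hB.eigenvalues_nonneg i]

theorem re_det_one_add_smul_le_pow_trace (hB : B.PosSemidef) (hc : 0 ≤ c) :
    (det (1 + (c : ℂ) • B)).re ≤ (1 + c * (trace B).re) ^ Fintype.card n := by
  rw [hB.isHermitian.re_det_one_add_smul, ← card_univ, ← prod_const]
  exact prod_le_prod (fun i _ => (hB.one_add_mul_eigenvalues_pos hc i).le)
    fun i _ => by gcongr; exact hB.eigenvalues_le_re_trace i

/-- The exponent is the size of `R`, not that of `Sᴴ R S`: with `R = Wᴴ W` the determinant is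
that of `1 + c (W S) (W S)ᴴ`. -/
theorem re_det_one_add_smul_conjTranspose_mul_mul_le [DecidableEq l] {R : Matrix n n ℂ}
    (hR : R.PosSemidef) (S : Matrix n l ℂ) (hc : 0 ≤ c) :
    (det (1 + (c : ℂ) • (Sᴴ * R * S))).re
      ≤ (1 + c * ((trace R).re * (trace (S * Sᴴ)).re)) ^ Fintype.card n := by
  open scoped MatrixOrder in
  obtain ⟨W, rfl⟩ := CStarAlgebra.nonneg_iff_eq_star_mul_self.mp hR.nonneg
  rw [star_eq_conjTranspose]
  have hWS := posSemidef_self_mul_conjTranspose (W * S)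
  have hswap : Sᴴ * (Wᴴ * W) * S = (W * S)ᴴ * (W * S) := by
    simp only [conjTranspose_mul, Matrix.mul_assoc]
  rw [hswap, det_one_add_smul_mul_comm, trace_mul_comm Wᴴ W]
  refine (hWS.re_det_one_add_smul_le_pow_trace hc).trans ?_
  gcongr
  · exact add_nonneg zero_le_one (mul_nonneg hc hWS.re_trace_nonneg)
  · exact re_trace_mul_mul_conjTranspose_le W S

end PosSemidef

variable [DecidableEq m]

theorem le_logb_re_det_one_add_smul_mul_conjTranspose {A : Matrix m n ℂ}
    (hA : A.rank = Fintype.card n) {c : ℝ} (hc : 0 < c) :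
    Fintype.card n * Real.logb 2 c + Real.logb 2 (det (Aᴴ * A)).re
      ≤ Real.logb 2 (det (1 + (c : ℂ) • (A * Aᴴ))).re := by
  have hA' : (Aᴴ * A).PosDef := .conjTranspose_mul_self A (mulVec_injective_of_rank_eq_card hA)
  have hdet : 0 < (det (Aᴴ * A)).re := by
    rw [hA'.isHermitian.re_det]
    exact prod_pos fun i _ => hA'.eigenvalues_pos i
  rw [det_one_add_smul_mul_comm, ← Real.logb_pow, ← Real.logb_mul (pow_pos hc _).ne' hdet.ne']
  exact Real.logb_le_logb_of_le one_lt_two (by positivity)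
    (hA'.posSemidef.pow_mul_re_det_le_re_det_one_add_smul hc.le)

theorem logb_re_det_one_add_smul_mul_conjTranspose_le (A : Matrix m n ℂ) {c : ℝ} (hc : 1 ≤ c) :
    Real.logb 2 (det (1 + (c : ℂ) • (A * Aᴴ))).re
      ≤ Fintype.card n * Real.logb 2 c + Real.logb 2 (det (1 + A * Aᴴ)).re := by
  have hA := posSemidef_conjTranspose_mul_self A
  rw [det_one_add_smul_mul_comm, det_one_add_mul_comm, ← Real.logb_pow,
    ← Real.logb_mul (pow_pos (by linarith) _).ne' hA.re_det_one_add_pos.ne']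
  exact Real.logb_le_logb_of_le one_lt_two (hA.re_det_one_add_smul_pos (by linarith))
    (hA.re_det_one_add_smul_le_pow_mul hc)

end Matrix

section Communication

variable {Ω : Type*} [MeasurableSpace Ω] (μ : Measure Ω) [IsProbabilityMeasure μ]
  {m k : Type*} [Fintype m] [DecidableEq m] [Fintype k] [DecidableEq k] {H : Ω → Matrix m k ℂ}

noncomputable def ergodicRate (μ : Measure Ω) (H : Ω → Matrix m k ℂ) (c : ℝ) : ℝ :=
  ∫ ω, Real.logb 2 (det (1 + (c : ℂ) • (H ω * (H ω)ᴴ))).re ∂μ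

theorem le_ergodicRate (hrank : ∀ᵐ ω ∂μ, (H ω).rank = Fintype.card k)
    (hdet : Integrable (fun ω => Real.logb 2 (det ((H ω)ᴴ * H ω)).re) μ) {c : ℝ} (hc : 0 < c)
    (hint : Integrable (fun ω => Real.logb 2 (det (1 + (c : ℂ) • (H ω * (H ω)ᴴ))).re) μ) :
    Fintype.card k * Real.logb 2 c + ∫ ω, Real.logb 2 (det ((H ω)ᴴ * H ω)).re ∂μ
      ≤ ergodicRate μ H c := by
  rw [← integral_const_add hdet]
  exact integral_mono_ae ((integrable_const _).add hdet) hint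
    (hrank.mono fun ω hω => le_logb_re_det_one_add_smul_mul_conjTranspose hω hc)

theorem ergodicRate_le
    (hint₁ : Integrable (fun ω => Real.logb 2 (det (1 + H ω * (H ω)ᴴ)).re) μ) {c : ℝ} (hc : 1 ≤ c)
    (hint : Integrable (fun ω => Real.logb 2 (det (1 + (c : ℂ) • (H ω * (H ω)ᴴ))).re) μ) :
    ergodicRate μ H c
      ≤ Fintype.card k * Real.logb 2 c + ∫ ω, Real.logb 2 (det (1 + H ω * (H ω)ᴴ)).re ∂μ := by
  rw [← integral_const_add hint₁]
  exact integral_mono hint ((integrable_const _).add hint₁)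
    fun ω => logb_re_det_one_add_smul_mul_conjTranspose_le (H ω) hc

theorem tendsto_ergodicRate_div_logb (hrank : ∀ᵐ ω ∂μ, (H ω).rank = Fintype.card k)
    (hdet : Integrable (fun ω => Real.logb 2 (det ((H ω)ᴴ * H ω)).re) μ)
    (hint : ∀ c : ℝ, 0 < c →
      Integrable (fun ω => Real.logb 2 (det (1 + (c : ℂ) • (H ω * (H ω)ᴴ))).re) μ)
    {s : ℝ} (hs : 0 < s) :
    Tendsto (fun p => ergodicRate μ H (p / s) / Real.logb 2 p) atTop (nhds (Fintype.card k)) := by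
  have hint₁ : Integrable (fun ω => Real.logb 2 (det (1 + H ω * (H ω)ᴴ)).re) μ := by
    simpa using hint 1 one_pos
  refine tendsto_div_of_sub_mul_mem_Icc (Real.tendsto_logb_atTop one_lt_two)
    (c₁ := ∫ ω, Real.logb 2 (det ((H ω)ᴴ * H ω)).re ∂μ - Fintype.card k * Real.logb 2 s)
    (c₂ := ∫ ω, Real.logb 2 (det (1 + H ω * (H ω)ᴴ)).re ∂μ - Fintype.card k * Real.logb 2 s) ?_
  filter_upwards [eventually_ge_atTop s] with p hp
  have hps : 0 < p / s := div_pos (hs.trans_le hp) hs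
  have h₁ := le_ergodicRate μ hrank hdet hps (hint _ hps)
  have h₂ := ergodicRate_le μ hint₁ ((one_le_div hs).mpr hp) (hint _ hps)
  rw [Real.logb_div (by linarith) hs.ne'] at h₁ h₂
  constructor <;> linarith

end Communication

section Sensing

variable {N L : ℕ} {R : Matrix (Fin N) (Fin N) ℂ} {σ P : ℝ}

/-- `σ` is the bandwidth fraction left for sensing (`1 - α` in FDSAC); `maxSensingRate` is the
paper's sensing rate without its prefactor `M σ / L`. -/
def sensingRates (R : Matrix (Fin N) (Fin N) ℂ) (L : ℕ) (σ P : ℝ) : Set ℝ :=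
  {y : ℝ | ∃ S : Matrix (Fin N) (Fin L) ℂ, (trace (S * Sᴴ)).re ≤ L * P ∧
    y = Real.logb 2 (det (1 + (σ : ℂ)⁻¹ • (Sᴴ * R * S))).re}

noncomputable def maxSensingRate (R : Matrix (Fin N) (Fin N) ℂ) (L : ℕ) (σ P : ℝ) : ℝ :=
  sSup (sensingRates R L σ P)

theorem le_of_mem_sensingRates (hR : R.PosSemidef) (hσ : 0 < σ) :
    ∀ y ∈ sensingRates R L σ P, y ≤ N * Real.logb 2 (1 + σ⁻¹ * ((trace R).re * (L * P))) := by
  rintro y ⟨S, hS, rfl⟩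
  have hσ' : 0 ≤ σ⁻¹ := inv_nonneg.mpr hσ.le
  rw [← Complex.ofReal_inv]
  have hpos := (hR.conjTranspose_mul_mul_same S).re_det_one_add_smul_pos hσ'
  have hdet := hR.re_det_one_add_smul_conjTranspose_mul_mul_le S hσ'
  rw [Fintype.card_fin] at hdet
  rw [← Real.logb_pow]
  refine Real.logb_le_logb_of_le one_lt_two hpos (hdet.trans ?_)
  have := hR.re_trace_nonneg
  have := (posSemidef_self_mul_conjTranspose S).re_trace_nonneg
  gcongr

theorem logb_re_det_one_add_smul_mem_sensingRates (hNL : N ≤ L) (hP : 0 ≤ P) :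
    Real.logb 2 (det (1 + ((P / σ : ℝ) : ℂ) • R)).re ∈ sensingRates R L σ P := by
  obtain ⟨S, hS⟩ : ∃ S : Matrix (Fin N) (Fin L) ℂ, S * Sᴴ = (P : ℂ) • 1 :=
    exists_mul_conjTranspose_eq_smul_one (Fin.castLEEmb hNL) hP
  refine ⟨S, ?_, ?_⟩
  · rw [hS, trace_smul, trace_one, Fintype.card_fin, smul_eq_mul, ← Complex.ofReal_natCast,
      ← Complex.ofReal_mul, Complex.ofReal_re, mul_comm]
    gcongr
  · rw [Matrix.mul_assoc, det_one_add_smul_mul_comm, Matrix.mul_assoc, hS, Matrix.mul_smul,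
      Matrix.mul_one, smul_smul, div_eq_mul_inv, mul_comm P, Complex.ofReal_mul,
      Complex.ofReal_inv]

theorem le_maxSensingRate (hR : R.PosDef) (hNL : N ≤ L) (hσ : 0 < σ) (hP : 0 < P) :
    N * Real.logb 2 (P / σ) + Real.logb 2 (det R).re ≤ maxSensingRate R L σ P := by
  have hdet : 0 < (det R).re := by
    rw [hR.isHermitian.re_det]
    exact prod_pos fun i _ => hR.eigenvalues_pos i
  have hPσ : 0 < P / σ := div_pos hP hσ
  calc N * Real.logb 2 (P / σ) + Real.logb 2 (det R).re
      = Real.logb 2 ((P / σ) ^ Fintype.card (Fin N) * (det R).re) := by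
        rw [Real.logb_mul (pow_pos hPσ _).ne' hdet.ne', Real.logb_pow, Fintype.card_fin]
    _ ≤ Real.logb 2 (det (1 + ((P / σ : ℝ) : ℂ) • R)).re :=
        Real.logb_le_logb_of_le one_lt_two (by positivity)
          (hR.posSemidef.pow_mul_re_det_le_re_det_one_add_smul hPσ.le)
    _ ≤ maxSensingRate R L σ P :=
        le_csSup ⟨_, le_of_mem_sensingRates hR.posSemidef hσ⟩
          (logb_re_det_one_add_smul_mem_sensingRates hNL hP.le)

theorem maxSensingRate_le (hR : R.PosSemidef) (hσ : 0 < σ) (hP : 1 ≤ P) :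
    maxSensingRate R L σ P
      ≤ N * Real.logb 2 P + N * Real.logb 2 (1 + σ⁻¹ * ((trace R).re * L)) := by
  have ha : 0 ≤ σ⁻¹ * ((trace R).re * L) :=
    mul_nonneg (inv_nonneg.mpr hσ.le) (mul_nonneg hR.re_trace_nonneg L.cast_nonneg)
  have hbound : N * Real.logb 2 (1 + σ⁻¹ * ((trace R).re * (L * P)))
      ≤ N * Real.logb 2 P + N * Real.logb 2 (1 + σ⁻¹ * ((trace R).re * L)) := by
    rw [← mul_add, ← Real.logb_mul (by linarith) (by linarith)]
    exact mul_le_mul_of_nonneg_left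
      (Real.logb_le_logb_of_le one_lt_two (by nlinarith) (by nlinarith)) N.cast_nonneg
  refine Real.sSup_le (fun y hy => (le_of_mem_sensingRates hR hσ y hy).trans hbound) ?_
  have := Real.logb_nonneg one_lt_two hP
  have := Real.logb_nonneg one_lt_two (le_add_of_nonneg_right ha)
  positivity

theorem tendsto_maxSensingRate_div_logb (hR : R.PosDef) (hNL : N ≤ L) (hσ : 0 < σ) :
    Tendsto (fun P => maxSensingRate R L σ P / Real.logb 2 P) atTop (nhds N) := by
  refine tendsto_div_of_sub_mul_mem_Icc (Real.tendsto_logb_atTop one_lt_two)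
    (c₁ := Real.logb 2 (det R).re - N * Real.logb 2 σ)
    (c₂ := N * Real.logb 2 (1 + σ⁻¹ * ((trace R).re * L))) ?_
  filter_upwards [eventually_ge_atTop 1] with P hP
  have h₁ := le_maxSensingRate hR hNL hσ (by linarith)
  have h₂ := maxSensingRate_le hR.posSemidef hσ hP (L := L)
  rw [Real.logb_div (by linarith) hσ.ne'] at h₁
  constructor <;> linarith

end Sensing

theorem fdsac_high_SNR_slopes_general
    {Ω : Type*} [MeasureSpace Ω] [IsProbabilityMeasure (ℙ : Measure Ω)]
    (M K N L : ℕ) (hK : 0 < K) (hMK : K ≤ M) (hN : 0 < N) (hNL : N ≤ L)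
    (α : ℝ) (hα0 : 0 < α) (hα1 : α < 1)
    (R : Matrix (Fin N) (Fin N) ℂ) (hR : R.PosDef)
    (H : Ω → Matrix (Fin M) (Fin K) ℂ)
    (hrank : ∀ᵐ ω, (H ω).rank = K)
    (hint : Integrable (fun ω => Real.log (Matrix.det ((H ω)ᴴ * H ω)).re))
    (hint' : ∀ p : ℝ, 0 < p → Integrable (fun ω =>
      Real.logb 2 (Matrix.det (1 + ((p / α : ℝ) : ℂ) • (H ω * (H ω)ᴴ))).re)) :
    Tendsto (fun pc : ℝ =>
        (α * ∫ ω, Real.logb 2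
            (Matrix.det (1 + ((pc / α : ℝ) : ℂ) • (H ω * (H ω)ᴴ))).re) /
          Real.logb 2 pc)
      atTop (nhds (α * K)) ∧
    Tendsto (fun ps : ℝ =>
        ((M : ℝ) * (1 - α) / L *
          sSup {y : ℝ | ∃ S : Matrix (Fin N) (Fin L) ℂ,
            (Matrix.trace (S * Sᴴ)).re ≤ L * ps ∧
            y = Real.logb 2
              (Matrix.det (1 + ((1 - α : ℝ) : ℂ)⁻¹ • (Sᴴ * R * S))).re}) /
          Real.logb 2 ps)
      atTop (nhds ((1 - α) * N * M / L)) ∧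
    α * K < (K : ℝ) ∧ (1 - α) * N * M / L < (N : ℝ) * M / L := by
  have hintc : ∀ c : ℝ, 0 < c →
      Integrable (fun ω => Real.logb 2 (det (1 + (c : ℂ) • (H ω * (H ω)ᴴ))).re) := fun c hc => by
    simpa [hα0.ne'] using hint' (c * α) (by positivity)
  have hcomm := tendsto_ergodicRate_div_logb ℙ (by simpa using hrank)
    (by simpa [Real.logb] using hint.div_const (Real.log 2)) hintc hα0
  have hsens := tendsto_maxSensingRate_div_logb hR hNL (by linarith : 0 < 1 - α)
  have hM : 0 < M := hK.trans_le hMK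
  have hL : (0 : ℝ) < L := by exact_mod_cast hN.trans_le hNL
  refine ⟨?_, ?_, mul_lt_of_lt_one_left (Nat.cast_pos.mpr hK) hα1, ?_⟩
  · rw [Fintype.card_fin] at hcomm
    exact (hcomm.const_mul α).congr fun p => (mul_div_assoc _ _ _).symm
  · rw [show (1 - α) * N * M / L = M * (1 - α) / L * (N : ℝ) by ring]
    exact (hsens.const_mul _).congr fun P => (mul_div_assoc _ _ _).symm
  · have hNM : (0 : ℝ) < N * M := by positivity
    exact div_lt_div_of_pos_right (by nlinarith) hL

/-- Corollary 8 / Remark 12: in FDSAC with bandwidth fraction `α ∈ (0,1)`, the high-SNR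
slope of the ergodic communication rate `α E[log₂ det(I + (p_c/α) H Hᴴ)]` is `α K`, the
high-SNR slope of the maximized sensing rate
`(M(1-α)/L) max_{tr(SSᴴ) ≤ L p_s} log₂ det(I + Sᴴ R S/(1-α))` is `(1-α) N M / L`,
and both are strictly smaller than the corresponding ISAC slopes `K` and `N M / L`. -/
theorem fdsac_high_SNR_slopes
    {Ω : Type*} [MeasureSpace Ω] [IsProbabilityMeasure (ℙ : Measure Ω)]
    (M K N L : ℕ) (hK : 0 < K) (hMK : K ≤ M) (hN : 0 < N) (hNL : N ≤ L)
    (α : ℝ) (hα0 : 0 < α) (hα1 : α < 1)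
    (R : Matrix (Fin N) (Fin N) ℂ) (hR : R.PosDef)
    (H : Ω → Matrix (Fin M) (Fin K) ℂ)
    (hmeas : ∀ m k, Measurable fun ω => H ω m k)
    (hrank : ∀ᵐ ω, (H ω).rank = K)
    (hint : Integrable (fun ω => Real.log (Matrix.det ((H ω)ᴴ * H ω)).re))
    (hint' : ∀ p : ℝ, 0 < p → Integrable (fun ω =>
      Real.logb 2 (Matrix.det (1 + ((p / α : ℝ) : ℂ) • (H ω * (H ω)ᴴ))).re)) :
    Tendsto (fun pc : ℝ =>
        (α * ∫ ω, Real.logb 2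
            (Matrix.det (1 + ((pc / α : ℝ) : ℂ) • (H ω * (H ω)ᴴ))).re) /
          Real.logb 2 pc)
      atTop (nhds (α * K)) ∧
    Tendsto (fun ps : ℝ =>
        ((M : ℝ) * (1 - α) / L *
          sSup {y : ℝ | ∃ S : Matrix (Fin N) (Fin L) ℂ,
            (Matrix.trace (S * Sᴴ)).re ≤ L * ps ∧
            y = Real.logb 2
              (Matrix.det (1 + ((1 - α : ℝ) : ℂ)⁻¹ • (Sᴴ * R * S))).re}) /
          Real.logb 2 ps)
      atTop (nhds ((1 - α) * N * M / L)) ∧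
    α * K < (K : ℝ) ∧ (1 - α) * N * M / L < (N : ℝ) * M / L :=
  fdsac_high_SNR_slopes_general M K N L hK hMK hN hNL α hα0 hα1 R hR H hrank hint hint'
end

section
/- Let A be an M×M Hermitian positive semidefinite random matrix and σ² ≥ 1 a constant. Then for every p > 0, E[log₂ det(I + (p/σ²) A)] ≥ E[log₂ det(I + p A)] − M log₂ σ², and if A has full rank almost surely, lim_{p→∞} (E[log₂ det(I + p A)] − E[log₂ det(I + (p/σ²) A)]) = r·log₂ σ² where r = rank(A) (a.s. constant), provided E[|log₂ det restricted to the positive eigenvalues|] < ∞. -/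
/-!
Diagonalising `A = U diag(λ) Uᴴ` turns `log det (1 + p A)` into `∑ᵢ log (1 + p λᵢ)`. Scaling the
noise power by `σ² ≥ 1` costs each eigenmode between `0` and `log σ²`; as `p → ∞` the loss tends
to `log σ²` on the modes with `λᵢ > 0` and vanishes on the others, so the total loss tends to
`rank A · log σ²`. The uniform bound `M log σ²` makes dominated convergence applicable.
-/

open Matrix MeasureTheory Filter Real Topology
open scoped ComplexOrder ProbabilityTheory

namespace Real

variable {b σ ℓ p : ℝ}

theorem logb_one_add_div_mul_le_logb_one_add_mul (hb : 1 < b) (hσ : 1 ≤ σ) (hℓ : 0 ≤ ℓ)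
    (hp : 0 ≤ p) :
    logb b (1 + p / σ * ℓ) ≤ logb b (1 + p * ℓ) := by
  have hpσ : p / σ ≤ p := div_le_self hp hσ
  exact logb_le_logb_of_le hb (by positivity) (by gcongr)

theorem logb_one_add_mul_le_logb_one_add_div_mul_add (hb : 1 < b) (hσ : 1 ≤ σ) (hℓ : 0 ≤ ℓ)
    (hp : 0 ≤ p) :
    logb b (1 + p * ℓ) ≤ logb b (1 + p / σ * ℓ) + logb b σ := by
  have hσ₀ : 0 < σ := one_pos.trans_le hσ
  rw [← logb_mul (by positivity) hσ₀.ne']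
  refine logb_le_logb_of_le hb (by positivity) ?_
  have : (1 + p / σ * ℓ) * σ = σ + p * ℓ := by field_simp
  rw [this]
  linarith

theorem tendsto_logb_one_add_mul_sub_logb_one_add_div_mul (hσ : 0 < σ) (hℓ : 0 < ℓ) :
    Tendsto (fun p => logb b (1 + p * ℓ) - logb b (1 + p / σ * ℓ)) atTop (𝓝 (logb b σ)) := by
  have h₁ := (tendsto_logb_comp_add_sub_logb (b := b) 1).comp
    (tendsto_id.atTop_mul_const hℓ)
  have h₂ := (tendsto_logb_comp_add_sub_logb (b := b) 1).comp
    ((tendsto_id.atTop_div_const hσ).atTop_mul_const hℓ)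
  have h := (h₁.sub h₂).add_const (logb b σ)
  rw [sub_zero, zero_add] at h
  refine h.congr' ?_
  filter_upwards [eventually_gt_atTop 0] with p hp
  have hsplit : logb b (p * ℓ) = logb b (p / σ * ℓ) + logb b σ := by
    rw [← logb_mul (by positivity) hσ.ne']
    field_simp
  simp only [Function.comp_apply, id_eq]
  rw [add_comm 1 (p * ℓ), add_comm 1 (p / σ * ℓ)]
  linarith

end Real

namespace Matrix

variable {𝕜 n : Type*} [RCLike 𝕜] [Fintype n] [DecidableEq n] {A : Matrix n n 𝕜}

theorem IsHermitian.det_one_add_smul_s19 (hA : A.IsHermitian) (p : ℝ) :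
    det (1 + (p : 𝕜) • A) = ∏ i, ((1 + p * hA.eigenvalues i : ℝ) : 𝕜) := by
  have hconj : 1 + (p : 𝕜) • A = Unitary.conjStarAlgAut 𝕜 _ hA.eigenvectorUnitary
      (diagonal fun i => ((1 + p * hA.eigenvalues i : ℝ) : 𝕜)) := by
    conv_lhs => rw [hA.spectral_theorem]
    rw [← map_smul, ← map_one (Unitary.conjStarAlgAut 𝕜 _ hA.eigenvectorUnitary), ← map_add]
    congr 1
    rw [← diagonal_one, ← diagonal_smul, diagonal_add]
    congr 1
    ext i
    simp
  rw [hconj, Unitary.conjStarAlgAut_apply, det_mul_right_comm,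
    Unitary.mul_star_self_of_mem hA.eigenvectorUnitary.2, one_mul, det_diagonal]

variable {b : ℝ}

theorem PosSemidef.logb_re_det_one_add_smul (hA : A.PosSemidef) {p : ℝ} (hp : 0 ≤ p) :
    logb b (RCLike.re (det (1 + (p : 𝕜) • A))) = ∑ i, logb b (1 + p * hA.1.eigenvalues i) := by
  have hpos : ∀ i, 0 < 1 + p * hA.1.eigenvalues i := fun i =>
    add_pos_of_pos_of_nonneg one_pos (mul_nonneg hp (hA.eigenvalues_nonneg i))
  rw [hA.1.det_one_add_smul_s19, ← RCLike.ofReal_prod, RCLike.ofReal_re,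
    logb_prod _ _ fun i _ => (hpos i).ne']

/-- The loss in `log_b det (1 + p A)` when the noise power is scaled by `σ2`, which divides the
SNR `p` by `σ2`. -/
noncomputable def rateLoss (b σ2 : ℝ) (A : Matrix n n 𝕜) (p : ℝ) : ℝ :=
  logb b (RCLike.re (det (1 + (p : 𝕜) • A))) -
    logb b (RCLike.re (det (1 + ((p / σ2 : ℝ) : 𝕜) • A)))

namespace PosSemidef

variable {σ2 p : ℝ}

theorem rateLoss_eq_sum (hA : A.PosSemidef) (hσ2 : 0 < σ2) (hp : 0 ≤ p) :
    rateLoss b σ2 A p =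
      ∑ i, (logb b (1 + p * hA.1.eigenvalues i) - logb b (1 + p / σ2 * hA.1.eigenvalues i)) := by
  rw [rateLoss, hA.logb_re_det_one_add_smul hp, hA.logb_re_det_one_add_smul (by positivity),
    Finset.sum_sub_distrib]

theorem rateLoss_nonneg (hA : A.PosSemidef) (hb : 1 < b) (hσ2 : 1 ≤ σ2) (hp : 0 ≤ p) :
    0 ≤ rateLoss b σ2 A p := by
  rw [hA.rateLoss_eq_sum (by linarith) hp]
  exact Finset.sum_nonneg fun i _ =>
    sub_nonneg.2 (logb_one_add_div_mul_le_logb_one_add_mul hb hσ2 (hA.eigenvalues_nonneg i) hp)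

theorem rateLoss_le (hA : A.PosSemidef) (hb : 1 < b) (hσ2 : 1 ≤ σ2) (hp : 0 ≤ p) :
    rateLoss b σ2 A p ≤ Fintype.card n * logb b σ2 := by
  rw [hA.rateLoss_eq_sum (by linarith) hp, ← nsmul_eq_mul, ← Finset.card_univ,
    ← Finset.sum_const]
  exact Finset.sum_le_sum fun i _ =>
    sub_le_iff_le_add'.2
      (logb_one_add_mul_le_logb_one_add_div_mul_add hb hσ2 (hA.eigenvalues_nonneg i) hp)

theorem tendsto_rateLoss (hA : A.PosSemidef) (hσ2 : 0 < σ2) :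
    Tendsto (rateLoss b σ2 A) atTop (𝓝 (A.rank * logb b σ2)) := by
  have hmode : ∀ i, Tendsto
      (fun p => logb b (1 + p * hA.1.eigenvalues i) - logb b (1 + p / σ2 * hA.1.eigenvalues i))
      atTop (𝓝 (if hA.1.eigenvalues i ≠ 0 then logb b σ2 else 0)) := fun i => by
    split_ifs with hi
    · exact tendsto_logb_one_add_mul_sub_logb_one_add_div_mul hσ2
        ((hA.eigenvalues_nonneg i).lt_of_ne' hi)
    · simp [not_not.1 hi]
  have hlim : ∑ i, (if hA.1.eigenvalues i ≠ 0 then logb b σ2 else 0) = A.rank * logb b σ2 := by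
    rw [Finset.sum_ite, Finset.sum_const_zero, add_zero, Finset.sum_const, nsmul_eq_mul,
      hA.1.rank_eq_card_non_zero_eigs, Fintype.card_subtype]
  rw [← hlim]
  refine (tendsto_finsetSum _ fun i _ => hmode i).congr' ?_
  filter_upwards [eventually_ge_atTop 0] with p hp
  exact (hA.rateLoss_eq_sum hσ2 hp).symm

end PosSemidef

end Matrix

theorem noise_scaling_highSNR_gap_general
    {Ω : Type*} [MeasureSpace Ω] [IsProbabilityMeasure (ℙ : Measure Ω)]
    (M : ℕ) (A : Ω → Matrix (Fin M) (Fin M) ℂ)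
    (hA : ∀ ω, (A ω).PosSemidef) (σ2 : ℝ) (hσ2 : 1 ≤ σ2)
    (hint : ∀ p : ℝ, 0 < p → Integrable (fun ω =>
      Real.logb 2 (Matrix.det (1 + (p : ℂ) • A ω)).re)) :
    (∀ p : ℝ, 0 < p →
      (∫ ω, Real.logb 2 (Matrix.det (1 + (p : ℂ) • A ω)).re) - M * Real.logb 2 σ2 ≤
        ∫ ω, Real.logb 2 (Matrix.det (1 + ((p / σ2 : ℝ) : ℂ) • A ω)).re) ∧
    ∀ r : ℕ, (∀ᵐ ω, (A ω).rank = r) →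
      Tendsto (fun p : ℝ =>
          (∫ ω, Real.logb 2 (Matrix.det (1 + (p : ℂ) • A ω)).re) -
            ∫ ω, Real.logb 2 (Matrix.det (1 + ((p / σ2 : ℝ) : ℂ) • A ω)).re)
        atTop (nhds (r * Real.logb 2 σ2)) := by
  have hσ2₀ : 0 < σ2 := one_pos.trans_le hσ2
  have hint_loss : ∀ p : ℝ, 0 < p → Integrable fun ω => (A ω).rateLoss 2 σ2 p := fun p hp =>
    (hint p hp).sub (hint _ (div_pos hp hσ2₀))
  have hgap : ∀ p : ℝ, 0 < p →
      (∫ ω, Real.logb 2 (Matrix.det (1 + (p : ℂ) • A ω)).re) -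
          ∫ ω, Real.logb 2 (Matrix.det (1 + ((p / σ2 : ℝ) : ℂ) • A ω)).re =
        ∫ ω, (A ω).rateLoss 2 σ2 p := fun p hp =>
    (integral_sub (hint p hp) (hint _ (div_pos hp hσ2₀))).symm
  have hbound : ∀ p : ℝ, 0 < p → ∀ ω, ‖(A ω).rateLoss 2 σ2 p‖ ≤ M * Real.logb 2 σ2 :=
    fun p hp ω => by
      rw [Real.norm_of_nonneg ((hA ω).rateLoss_nonneg one_lt_two hσ2 hp.le)]
      simpa using (hA ω).rateLoss_le one_lt_two hσ2 hp.le
  refine ⟨fun p hp => ?_, fun r hr => ?_⟩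
  · have hmono := integral_mono (hint_loss p hp)
      (integrable_const (M * Real.logb 2 σ2)) fun ω => (le_abs_self _).trans (hbound p hp ω)
    simp only [integral_const, probReal_univ, one_smul] at hmono
    linarith [hgap p hp]
  · have hlim : Tendsto (fun p => ∫ ω, (A ω).rateLoss 2 σ2 p) atTop
        (𝓝 (∫ _ : Ω, r * Real.logb 2 σ2)) := by
      refine tendsto_integral_filter_of_dominated_convergence (fun _ => M * Real.logb 2 σ2)
        ?_ ?_ (integrable_const _) ?_
      · filter_upwards [eventually_gt_atTop 0] with p hp
        exact (hint_loss p hp).aestronglyMeasurable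
      · filter_upwards [eventually_gt_atTop 0] with p hp
        exact Eventually.of_forall (hbound p hp)
      · filter_upwards [hr] with ω hω
        simpa [hω] using (hA ω).tendsto_rateLoss (b := 2) hσ2₀
    rw [integral_const, probReal_univ, one_smul] at hlim
    exact hlim.congr' <| by
      filter_upwards [eventually_gt_atTop 0] with p hp using (hgap p hp).symm

/-- Noise scaling costs exactly `r log₂ σ²` at high SNR: for a random Hermitian PSD
matrix `A` and `σ² ≥ 1`, `E[log₂ det(I + (p/σ²)A)] ≥ E[log₂ det(I + p A)] - M log₂ σ²`,
and if `A` has a.s. constant rank `r` then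
`E[log₂ det(I + p A)] - E[log₂ det(I + (p/σ²)A)] → r log₂ σ²` as `p → ∞`. -/
theorem noise_scaling_highSNR_gap
    {Ω : Type*} [MeasureSpace Ω] [IsProbabilityMeasure (ℙ : Measure Ω)]
    (M : ℕ) (A : Ω → Matrix (Fin M) (Fin M) ℂ)
    (hmeas : ∀ i j, Measurable fun ω => A ω i j)
    (hA : ∀ ω, (A ω).PosSemidef) (σ2 : ℝ) (hσ2 : 1 ≤ σ2)
    (hint : ∀ p : ℝ, 0 < p → Integrable (fun ω =>
      Real.logb 2 (Matrix.det (1 + (p : ℂ) • A ω)).re))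
    (hdom : Integrable (fun ω => |Real.log (Matrix.det (1 + A ω)).re|)) :
    (∀ p : ℝ, 0 < p →
      (∫ ω, Real.logb 2 (Matrix.det (1 + (p : ℂ) • A ω)).re) - M * Real.logb 2 σ2 ≤
        ∫ ω, Real.logb 2 (Matrix.det (1 + ((p / σ2 : ℝ) : ℂ) • A ω)).re) ∧
    ∀ r : ℕ, (∀ᵐ ω, (A ω).rank = r) →
      Tendsto (fun p : ℝ =>
          (∫ ω, Real.logb 2 (Matrix.det (1 + (p : ℂ) • A ω)).re) -
            ∫ ω, Real.logb 2 (Matrix.det (1 + ((p / σ2 : ℝ) : ℂ) • A ω)).re)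
        atTop (nhds (r * Real.logb 2 σ2)) :=
  noise_scaling_highSNR_gap_general M A hA σ2 hσ2 hint
end
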